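/- arXiv:1311.3049 — 3 statements merged into one kernel-verified Lean document; each statement's English description precedes it below -/
import Mathlib

section
/- Let G_w be a weighted bicyclic graph of order n that has at least one pendant vertex and whose base is θ(p,l,q) for some admissible p, l, q (p, l, q ≥ 0 with at most one of them zero). Then i_+(G_w) ≥ 2, i_-(G_w) ≥ 2 and i_0(G_w) ≤ n−4. -/
open Matrix

/-- The positive inertia index of a matrix: the number of positive eigenvalues
(counted with multiplicity) if the matrix is Hermitian, and `0` otherwise. -/
noncomputable def posInertia {k 𝕜 : Type*} [RCLike 𝕜] [Fintype k] [DecidableEq k]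
    (A : Matrix k k 𝕜) : ℕ :=
  if h : A.IsHermitian then Fintype.card {i // 0 < h.eigenvalues i} else 0

/-- The negative inertia index of a matrix. -/
noncomputable def negInertia {k 𝕜 : Type*} [RCLike 𝕜] [Fintype k] [DecidableEq k]
    (A : Matrix k k 𝕜) : ℕ :=
  if h : A.IsHermitian then Fintype.card {i // h.eigenvalues i < 0} else 0

/-- The nullity of a matrix: the number of zero eigenvalues. -/
noncomputable def nulInertia {k 𝕜 : Type*} [RCLike 𝕜] [Fintype k] [DecidableEq k]
    (A : Matrix k k 𝕜) : ℕ :=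
  if h : A.IsHermitian then Fintype.card {i // h.eigenvalues i = 0} else 0

/-- A weighted graph: a simple graph together with a symmetric weight function
which is positive on all edges. -/
structure WeightedGraph (V : Type*) where
  G : SimpleGraph V
  w : V → V → ℝ
  symm : ∀ u v : V, w u v = w v u
  pos : ∀ u v : V, G.Adj u v → 0 < w u v

open Classical in
/-- The (weighted) adjacency matrix of a weighted graph. -/
noncomputable def WeightedGraph.adjMatrix {V : Type*} [Fintype V] [DecidableEq V]
    (W : WeightedGraph V) : Matrix V V ℝ :=
  fun a b => if W.G.Adj a b then W.w a b else 0

/-- `i₊`, the number of positive eigenvalues of the adjacency matrix. -/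
noncomputable def WeightedGraph.iPos {V : Type*} [Fintype V] [DecidableEq V]
    (W : WeightedGraph V) : ℕ := posInertia W.adjMatrix

/-- `i₋`, the number of negative eigenvalues of the adjacency matrix. -/
noncomputable def WeightedGraph.iNeg {V : Type*} [Fintype V] [DecidableEq V]
    (W : WeightedGraph V) : ℕ := negInertia W.adjMatrix

/-- `i₀`, the number of zero eigenvalues of the adjacency matrix. -/
noncomputable def WeightedGraph.iNul {V : Type*} [Fintype V] [DecidableEq V]
    (W : WeightedGraph V) : ℕ := nulInertia W.adjMatrix

/-- A weighted graph is bicyclic if its underlying graph is connected and has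
exactly one more edge than vertices. -/
def WeightedGraph.IsBicyclic {V : Type*} [Fintype V] (W : WeightedGraph V) : Prop :=
  W.G.Connected ∧ W.G.edgeSet.ncard = Fintype.card V + 1

/-- The graph has a pendant vertex (a vertex of degree one). -/
def WeightedGraph.HasPendant {V : Type*} (W : WeightedGraph V) : Prop :=
  ∃ x : V, (W.G.neighborSet x).ncard = 1

/-- The graph has no pendant vertices. -/
def WeightedGraph.NoPendant {V : Type*} (W : WeightedGraph V) : Prop :=
  ∀ x : V, (W.G.neighborSet x).ncard ≠ 1

/-- The base of `G` is (isomorphic to) `H`: some induced subgraph of `G` is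
isomorphic to `H`.  (For a bicyclic graph `G` and a bicyclic graph `H` without
pendant vertices this induced subgraph is necessarily the unique base of `G`.) -/
def BaseIsoTo {V B : Type*} (G : SimpleGraph V) (H : SimpleGraph B) : Prop :=
  ∃ S : Set V, Nonempty ((G.induce S) ≃g H)

/-- Vertex labels of the connecting path of `∞(p,l,q)`: the path starts at the
vertex `0` of the first cycle `0, 1, …, p-1`, and its further vertices are
`p, p+1, …`. -/
def pathVert (p j : ℕ) : ℕ := if j = 0 then 0 else p - 1 + j

/-- Vertex labels of the second cycle of `∞(p,l,q)`: it starts at the last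
vertex of the connecting path and continues with `p+l-1, p+l, …`. -/
def infCyc2Vert (p l k : ℕ) : ℕ := if k = 0 then pathVert p (l - 1) else p + l - 2 + k

/-- The edge relation of `∞(p,l,q)` on the vertex labels `0, …, p+q+l-3`:
the first cycle on `0, …, p-1`, the connecting path (on `l` vertices) from the
vertex `0`, and the second cycle attached at the last path vertex. -/
def infinityRel (p l q a b : ℕ) : Prop :=
  (a + 1 < p ∧ b = a + 1) ∨ (a = 0 ∧ b = p - 1) ∨
  (∃ j, j + 1 < l ∧ a = pathVert p j ∧ b = pathVert p (j + 1)) ∨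
  (∃ k, k + 1 < q ∧ a = infCyc2Vert p l k ∧ b = infCyc2Vert p l (k + 1)) ∨
  (a = infCyc2Vert p l 0 ∧ b = infCyc2Vert p l (q - 1))

/-- The graph `∞(p,l,q)`: two vertex-disjoint cycles of lengths `p` and `q`
joined by a path on `l` vertices (whose endpoints are identified with one
vertex on each cycle).  It has `p + q + l - 2` vertices. -/
def infinityGraph (p l q : ℕ) : SimpleGraph (Fin (p + q + l - 2)) :=
  SimpleGraph.fromRel (fun a b => infinityRel p l q a.1 b.1)

/-- The edge relation of one of the three `u,v`-paths of `θ(p,l,q)` having `m`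
internal vertices, the internal vertices being labelled `o, o+1, …, o+m-1`
(`u` is the vertex `0` and `v` is the vertex `1`). -/
def thetaPathRel (m o a b : ℕ) : Prop :=
  if m = 0 then a = 0 ∧ b = 1
  else (a = 0 ∧ b = o) ∨ (∃ i, i + 1 < m ∧ a = o + i ∧ b = o + i + 1) ∨ (a = o + m - 1 ∧ b = 1)

/-- The graph `θ(p,l,q)`: two vertices `u = 0` and `v = 1` joined by three
internally disjoint paths with `p`, `l`, `q` internal vertices respectively.
It has `p + l + q + 2` vertices. -/
def thetaGraph (p l q : ℕ) : SimpleGraph (Fin (p + l + q + 2)) :=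
  SimpleGraph.fromRel (fun a b =>
    thetaPathRel p 2 a.1 b.1 ∨ thetaPathRel l (p + 2) a.1 b.1 ∨
      thetaPathRel q (p + l + 2) a.1 b.1)

/-- The edge set of `G` is exactly the (symmetrized) list `E`. -/
def adjSpec {V : Type*} (G : SimpleGraph V) (E : List (V × V)) : Prop :=
  ∀ a b : V, G.Adj a b ↔ ((a, b) ∈ E ∨ (b, a) ∈ E)

/-- The weighted subgraph induced on a set `S` of vertices. -/
def WeightedGraph.induce {V : Type*} (W : WeightedGraph V) (S : Set V) : WeightedGraph S where
  G := W.G.induce S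
  w := fun a b => W.w a b
  symm := fun a b => W.symm a b
  pos := fun a b h => W.pos a b h

/-- The `k`-th vertex (mod `n`) of a cycle on `Fin n`. -/
def cycVert (n : ℕ) (hn : 0 < n) (k : ℕ) : Fin n := ⟨k % n, Nat.mod_lt _ hn⟩

/-- `W` is the weighted graph `θ(1,1,1)` (i.e. `K_{2,3}`) with parts `{u, v}`
and `{x1, x2, x3}`. -/
def Theta111Shape {V : Type*} (W : WeightedGraph V) (u v x1 x2 x3 : V) : Prop :=
  [u, v, x1, x2, x3].Nodup ∧ (∀ z : V, z ∈ [u, v, x1, x2, x3]) ∧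
    adjSpec W.G [(u, x1), (u, x2), (u, x3), (x1, v), (x2, v), (x3, v)]

/-- `W` is the weighted graph `θ(1,0,1)` on vertices `u, v, x1, x2` with edges
`uv, ux1, x1v, ux2, x2v`. -/
def Theta101Shape {V : Type*} (W : WeightedGraph V) (u v x1 x2 : V) : Prop :=
  [u, v, x1, x2].Nodup ∧ (∀ z : V, z ∈ [u, v, x1, x2]) ∧
    adjSpec W.G [(u, v), (u, x1), (x1, v), (u, x2), (x2, v)]

/-- `W` is the weighted graph `θ(1,0,2)` on vertices `u, v, x, y, z` with edges
`uv, ux, xv, uy, yz, zv`. -/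
def Theta102Shape {V : Type*} (W : WeightedGraph V) (u v x y z : V) : Prop :=
  [u, v, x, y, z].Nodup ∧ (∀ t : V, t ∈ [u, v, x, y, z]) ∧
    adjSpec W.G [(u, v), (u, x), (x, v), (u, y), (y, z), (z, v)]

/-- `W` is the weighted graph `θ(2,0,2)` on vertices `u, v, x1, x2, y1, y2`
with edges `uv, ux1, x1x2, x2v, uy1, y1y2, y2v`. -/
def Theta202Shape {V : Type*} (W : WeightedGraph V) (u v x1 x2 y1 y2 : V) : Prop :=
  [u, v, x1, x2, y1, y2].Nodup ∧ (∀ t : V, t ∈ [u, v, x1, x2, y1, y2]) ∧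
    adjSpec W.G [(u, v), (u, x1), (x1, x2), (x2, v), (u, y1), (y1, y2), (y2, v)]

/-- `W` is the weighted graph `θ(1,1,2)` on vertices `u, v, x1, x2, y1, y2`
with edges `ux1, x1v, ux2, x2v, uy1, y1y2, y2v`. -/
def Theta112Shape {V : Type*} (W : WeightedGraph V) (u v x1 x2 y1 y2 : V) : Prop :=
  [u, v, x1, x2, y1, y2].Nodup ∧ (∀ t : V, t ∈ [u, v, x1, x2, y1, y2]) ∧
    adjSpec W.G [(u, x1), (x1, v), (u, x2), (x2, v), (u, y1), (y1, y2), (y2, v)]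

/-- `W` is the weighted graph `∞(3,1,3)`: two triangles sharing the vertex `c`. -/
def Inf313Shape {V : Type*} (W : WeightedGraph V) (c a1 a2 b1 b2 : V) : Prop :=
  [c, a1, a2, b1, b2].Nodup ∧ (∀ t : V, t ∈ [c, a1, a2, b1, b2]) ∧
    adjSpec W.G [(c, a1), (a1, a2), (a2, c), (c, b1), (b1, b2), (b2, c)]

/-- `W` is the weighted graph `∞(3,2,3)`: the triangle `u,x,y` and the triangle
`v,s,t`, joined by the edge `uv`. -/
def Inf323Shape {V : Type*} (W : WeightedGraph V) (u v x y s t : V) : Prop :=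
  [u, v, x, y, s, t].Nodup ∧ (∀ z : V, z ∈ [u, v, x, y, s, t]) ∧
    adjSpec W.G [(u, x), (x, y), (y, u), (v, s), (s, t), (t, v), (u, v)]

/-- `W` is the weighted graph `∞(3,1,4)`: the triangle `c,x,y` and the
quadrilateral `c,z1,z2,z3` sharing the vertex `c`. -/
def Inf314Shape {V : Type*} (W : WeightedGraph V) (c x y z1 z2 z3 : V) : Prop :=
  [c, x, y, z1, z2, z3].Nodup ∧ (∀ t : V, t ∈ [c, x, y, z1, z2, z3]) ∧
    adjSpec W.G [(c, x), (x, y), (y, c), (c, z1), (z1, z2), (z2, z3), (z3, c)]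

/-- `W` is the weighted graph `∞(4,1,4)`: the quadrilaterals `c,x1,x2,x3` and
`c,y1,y2,y3` sharing the vertex `c`. -/
def Inf414Shape {V : Type*} (W : WeightedGraph V) (c x1 x2 x3 y1 y2 y3 : V) : Prop :=
  [c, x1, x2, x3, y1, y2, y3].Nodup ∧ (∀ t : V, t ∈ [c, x1, x2, x3, y1, y2, y3]) ∧
    adjSpec W.G [(c, x1), (x1, x2), (x2, x3), (x3, c), (c, y1), (y1, y2), (y2, y3), (y3, c)]

/-!
Let `x` be a pendant vertex and `y` its neighbour. The graph has `n + 1` edges while `y` lies on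
at most `n - 1` of them, so some edge `ab` avoids `y`, hence is not adjacent to `x`. For `ε = ±1`
and `γ` large, the quadratic form of the adjacency matrix, multiplied by `ε`, is positive definite
on `span {ε e_a + e_b, γ e_x + ε e_y}`: only `x y` couples `e_x` to the rest. A form definite on a
`k`-dimensional subspace forces `k` eigenvalues of that sign, which gives `i₊, i₋ ≥ 2`, and
`i₀ = n - i₊ - i₋`.
-/

namespace Matrix.IsHermitian

variable {n : Type*} [Fintype n] [DecidableEq n] {A : Matrix n n ℝ}

lemma dotProduct_mulVec_self_eq_sum (hA : A.IsHermitian) (v : n → ℝ) :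
    v ⬝ᵥ A *ᵥ v =
      ∑ i, hA.eigenvalues i * ((star (hA.eigenvectorUnitary : Matrix n n ℝ) *ᵥ v) i) ^ 2 := by
  set U : Matrix n n ℝ := (hA.eigenvectorUnitary : Matrix n n ℝ)
  conv_lhs => rw [hA.spectral_theorem, Unitary.conjStarAlgAut_apply]
  rw [← mulVec_mulVec, ← mulVec_mulVec, dotProduct_mulVec, ← mulVec_transpose,
    show star U = Uᵀ from rfl]
  simp only [dotProduct, mulVec_diagonal, Function.comp_apply, RCLike.ofReal_real_eq_id, id]
  exact Finset.sum_congr rfl fun i _ => by ring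

lemma finrank_le_card_eigenvalues {E : Type*} [AddCommGroup E] [Module ℝ E]
    [FiniteDimensional ℝ E] (hA : A.IsHermitian) (P : ℝ → Prop) [DecidablePred P]
    (φ : E →ₗ[ℝ] n → ℝ)
    (hφ : ∀ c, (∀ i, P (hA.eigenvalues i) →
      (star (hA.eigenvectorUnitary : Matrix n n ℝ) *ᵥ φ c) i = 0) → c = 0) :
    Module.finrank ℝ E ≤ Fintype.card {i // P (hA.eigenvalues i)} := by
  let L : E →ₗ[ℝ] {i // P (hA.eigenvalues i)} → ℝ :=
    LinearMap.funLeft ℝ ℝ Subtype.val ∘ₗ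
      (star (hA.eigenvectorUnitary : Matrix n n ℝ)).mulVecLin ∘ₗ φ
  have hL : Function.Injective L := by
    rw [← LinearMap.ker_eq_bot, LinearMap.ker_eq_bot']
    exact fun c hc => hφ c fun i hi => congrFun hc ⟨i, hi⟩
  simpa using LinearMap.finrank_le_finrank_of_injective hL

lemma finrank_le_posInertia {E : Type*} [AddCommGroup E] [Module ℝ E] [FiniteDimensional ℝ E]
    (hA : A.IsHermitian) (φ : E →ₗ[ℝ] n → ℝ) (hφ : ∀ c ≠ 0, 0 < φ c ⬝ᵥ A *ᵥ φ c) :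
    Module.finrank ℝ E ≤ posInertia A := by
  rw [posInertia, dif_pos hA]
  refine hA.finrank_le_card_eigenvalues (0 < ·) φ fun c hc => ?_
  by_contra hne
  refine (hφ c hne).not_ge ?_
  rw [hA.dotProduct_mulVec_self_eq_sum]
  refine Finset.sum_nonpos fun i _ => ?_
  by_cases hi : 0 < hA.eigenvalues i
  · simp [hc i hi]
  · exact mul_nonpos_of_nonpos_of_nonneg (not_lt.mp hi) (sq_nonneg _)

lemma finrank_le_negInertia {E : Type*} [AddCommGroup E] [Module ℝ E] [FiniteDimensional ℝ E]
    (hA : A.IsHermitian) (φ : E →ₗ[ℝ] n → ℝ) (hφ : ∀ c ≠ 0, φ c ⬝ᵥ A *ᵥ φ c < 0) :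
    Module.finrank ℝ E ≤ negInertia A := by
  rw [negInertia, dif_pos hA]
  refine hA.finrank_le_card_eigenvalues (· < 0) φ fun c hc => ?_
  by_contra hne
  refine (hφ c hne).not_ge ?_
  rw [hA.dotProduct_mulVec_self_eq_sum]
  refine Finset.sum_nonneg fun i _ => ?_
  by_cases hi : hA.eigenvalues i < 0
  · simp [hc i hi]
  · exact mul_nonneg (not_lt.mp hi) (sq_nonneg _)

lemma posInertia_add_negInertia_add_nulInertia (hA : A.IsHermitian) :
    posInertia A + negInertia A + nulInertia A = Fintype.card n := by
  rw [posInertia, negInertia, nulInertia, dif_pos hA, dif_pos hA, dif_pos hA]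
  simp only [Fintype.card_subtype]
  rw [← Finset.card_union_of_disjoint, ← Finset.card_union_of_disjoint]
  · congr 1
    ext i
    have := lt_trichotomy (hA.eigenvalues i) 0
    simp only [Finset.mem_union, Finset.mem_filter, Finset.mem_univ, true_and]
    tauto
  · rw [← Finset.filter_or]
    exact Finset.disjoint_filter.2 fun i _ hne hzero => by simp [hzero] at hne
  · exact Finset.disjoint_filter.2 fun i _ hpos hneg => (lt_asymm hpos hneg).elim

end Matrix.IsHermitian

lemma binary_quadratic_pos_of_discrim_neg {a b c s t : ℝ} (ha : 0 < a) (hd : discrim a b c < 0)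
    (hst : s ≠ 0 ∨ t ≠ 0) : 0 < a * s ^ 2 + b * s * t + c * t ^ 2 := by
  rw [discrim] at hd
  rcases eq_or_ne t 0 with rfl | ht
  · have hs : s ≠ 0 := by simpa using hst
    have : 0 < s ^ 2 := by positivity
    simpa using mul_pos ha this
  · have : 0 < t ^ 2 := by positivity
    nlinarith [sq_nonneg (2 * a * s + b * t), mul_pos this (neg_pos.2 hd)]

section

variable {n : Type*} [Fintype n] [DecidableEq n] {A : Matrix n n ℝ}

lemma exists_linearMap_sign_mul_dotProduct_mulVec_pos (hA : A.IsHermitian)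
    (hdiag : ∀ i, A i i = 0) {a b x y : n} (hax : A a x = 0) (hbx : A b x = 0)
    (hab : 0 < A a b) (hxy : 0 < A x y) {ε : ℝ} (hε : ε ^ 2 = 1) :
    ∃ φ : (Fin 2 → ℝ) →ₗ[ℝ] n → ℝ, ∀ c ≠ 0, 0 < ε * (φ c ⬝ᵥ A *ᵥ φ c) := by
  set r := ε * A a y + A b y
  -- chosen so that the discriminant `r ^ 2 - 4 (r ^ 2 + 1)` of the form below is negative
  set γ := (r ^ 2 + 1) / (A a b * A x y)
  let v : Fin 2 → n → ℝ :=
    ![ε • Pi.single a 1 + Pi.single b 1, γ • Pi.single x 1 + ε • Pi.single y 1]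
  refine ⟨Fintype.linearCombination ℝ v, fun c hc => ?_⟩
  have hsymm : ∀ i j, A j i = A i j := fun i j => by simpa using hA.apply i j
  have hquad : Fintype.linearCombination ℝ v c ⬝ᵥ A *ᵥ Fintype.linearCombination ℝ v c =
      ε * (2 * (A a b * c 0 ^ 2 + r * c 0 * c 1 + γ * A x y * c 1 ^ 2)) := by
    simp only [Fintype.linearCombination_apply, Fin.sum_univ_two, v, Matrix.cons_val_zero,
      Matrix.cons_val_one, mulVec_add, mulVec_smul, mulVec_single_one,
      dotProduct_add, add_dotProduct, smul_dotProduct, dotProduct_smul, single_dotProduct,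
      smul_eq_mul, col_apply, hdiag, hax, hbx, hsymm]
    ring
  have hform : 0 < A a b * c 0 ^ 2 + r * c 0 * c 1 + γ * A x y * c 1 ^ 2 := by
    refine binary_quadratic_pos_of_discrim_neg hab ?_ ?_
    · have : A a b * (γ * A x y) = r ^ 2 + 1 := by
        simp only [γ]
        field_simp
      rw [discrim]
      nlinarith [sq_nonneg r]
    · by_contra! h
      exact hc (funext fun i => by fin_cases i <;> simp [h.1, h.2])
  calc 0 < 2 * (A a b * c 0 ^ 2 + r * c 0 * c 1 + γ * A x y * c 1 ^ 2) := by positivity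
    _ = ε * (Fintype.linearCombination ℝ v c ⬝ᵥ A *ᵥ Fintype.linearCombination ℝ v c) := by
      rw [hquad, ← mul_assoc, ← sq, hε, one_mul]

lemma two_le_posInertia_and_two_le_negInertia (hA : A.IsHermitian) (hdiag : ∀ i, A i i = 0)
    {a b x y : n} (hax : A a x = 0) (hbx : A b x = 0) (hab : 0 < A a b) (hxy : 0 < A x y) :
    2 ≤ posInertia A ∧ 2 ≤ negInertia A := by
  obtain ⟨φpos, hφpos⟩ := exists_linearMap_sign_mul_dotProduct_mulVec_pos hA hdiag hax hbx hab hxy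
    (ε := 1) (by norm_num)
  obtain ⟨φneg, hφneg⟩ := exists_linearMap_sign_mul_dotProduct_mulVec_pos hA hdiag hax hbx hab hxy
    (ε := -1) (by norm_num)
  constructor
  · simpa using hA.finrank_le_posInertia φpos fun c hc => by simpa using hφpos c hc
  · simpa using hA.finrank_le_negInertia φneg fun c hc => by simpa using hφneg c hc

end

lemma SimpleGraph.exists_adj_ne_ne_of_degree_lt_card_edgeFinset {V : Type*} [DecidableEq V]
    (G : SimpleGraph V) [Fintype G.edgeSet] (y : V) [Fintype (G.neighborSet y)]
    (h : G.degree y < G.edgeFinset.card) : ∃ a b, G.Adj a b ∧ a ≠ y ∧ b ≠ y := by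
  obtain ⟨e, he, hey⟩ := Finset.exists_mem_notMem_of_card_lt_card
    ((G.card_incidenceFinset_eq_degree y).trans_lt h)
  induction e using Sym2.ind with
  | _ a b =>
    rw [mem_edgeFinset, mem_edgeSet] at he
    simp only [mem_incidenceFinset, mk'_mem_incidenceSet_iff, he, true_and, not_or] at hey
    exact ⟨a, b, he, Ne.symm hey.1, Ne.symm hey.2⟩

namespace WeightedGraph

variable {V : Type*} [Fintype V] [DecidableEq V] (W : WeightedGraph V)

lemma adjMatrix_isHermitian : W.adjMatrix.IsHermitian := by
  ext i j
  by_cases h : W.G.Adj i j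
  · simp [adjMatrix, h, h.symm, W.symm i j]
  · have h' : ¬W.G.Adj j i := fun h' => h h'.symm
    simp [adjMatrix, h, h']

lemma adjMatrix_apply_self (a : V) : W.adjMatrix a a = 0 := by
  simp [adjMatrix]

lemma adjMatrix_apply_of_not_adj {a b : V} (h : ¬W.G.Adj a b) : W.adjMatrix a b = 0 := by
  simp [adjMatrix, h]

lemma adjMatrix_pos_of_adj {a b : V} (h : W.G.Adj a b) : 0 < W.adjMatrix a b := by
  simpa [adjMatrix, h] using W.pos a b h

end WeightedGraph

theorem stmt6_general {V : Type*} [Fintype V] [DecidableEq V] (W : WeightedGraph V)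
    (hbic : W.IsBicyclic) (hpend : W.HasPendant) :
    2 ≤ W.iPos ∧ 2 ≤ W.iNeg ∧ W.iNul ≤ Fintype.card V - 4 := by
  classical
  obtain ⟨x, hx⟩ := hpend
  obtain ⟨y, hy⟩ := Set.ncard_eq_one.mp hx
  have hxy : W.G.Adj x y := by simp [← SimpleGraph.mem_neighborSet, hy]
  have hnotx : ∀ {z}, z ≠ y → W.adjMatrix z x = 0 := fun {z} hz =>
    W.adjMatrix_apply_of_not_adj fun h => hz (by rw [← Set.mem_singleton_iff, ← hy]; exact h.symm)
  have hdeg : W.G.degree y < W.G.edgeFinset.card := by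
    rw [← Set.ncard_coe_finset, SimpleGraph.coe_edgeFinset, hbic.2]
    exact (W.G.degree_lt_card_verts y).trans (Nat.lt_succ_self _)
  obtain ⟨a, b, hab, hay, hby⟩ := W.G.exists_adj_ne_ne_of_degree_lt_card_edgeFinset y hdeg
  obtain ⟨hpos, hneg⟩ := two_le_posInertia_and_two_le_negInertia W.adjMatrix_isHermitian
    W.adjMatrix_apply_self (hnotx hay) (hnotx hby) (W.adjMatrix_pos_of_adj hab)
    (W.adjMatrix_pos_of_adj hxy)
  have hsum := W.adjMatrix_isHermitian.posInertia_add_negInertia_add_nulInertia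
  exact ⟨hpos, hneg, by unfold WeightedGraph.iNul; omega⟩

/-- a weighted bicyclic graph with pendant vertices whose base is
a `θ`-graph has at least `2` positive and `2` negative eigenvalues, and
nullity at most `n - 4`. -/
theorem stmt6 {V : Type*} [Fintype V] [DecidableEq V] (W : WeightedGraph V)
    (hbic : W.IsBicyclic) (hpend : W.HasPendant)
    (hbase : ∃ p l q : ℕ, p + l ≠ 0 ∧ p + q ≠ 0 ∧ l + q ≠ 0 ∧
      BaseIsoTo W.G (thetaGraph p l q)) :
    2 ≤ W.iPos ∧ 2 ≤ W.iNeg ∧ W.iNul ≤ Fintype.card V - 4 :=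
  stmt6_general W hbic hpend
end

section
/- Let M be an n×n Hermitian matrix, y a column vector in ℂ^n, a a real number, and let N be the (n+1)×(n+1) Hermitian matrix given in block form by N = [[M, y],[y*, a]], where y* is the conjugate transpose of y. Then i_+(N) − 1 ≤ i_+(M) ≤ i_+(N) and i_-(N) − 1 ≤ i_-(M) ≤ i_-(N). -/
open Matrix

/-!
The positive inertia index of a Hermitian matrix `A` is the largest dimension of a subspace on
which `x ↦ Re (x* A x)` is positive definite: in eigenvector coordinates this form is
`∑ λᵢ |zᵢ|²`, positive definite on the span of the eigenvectors with `λᵢ > 0`, and nonpositive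
on the complementary coordinate subspace, which therefore meets every positive definite subspace
trivially. The form of a principal submatrix `M` of `N` is the form of `N` restricted to the
coordinate subspace of `M`'s indices. Pushing subspaces forward gives `i₊(M) ≤ i₊(N)`, and
intersecting a positive definite subspace of `N` with that coordinate subspace, of codimension
one here, loses at most one dimension, so `i₊(N) ≤ i₊(M) + 1`. The negative indices are the
positive indices of the negated forms.
-/

open Module Function Matrix

section PosDefDims

variable (K : Type*) {V W : Type*} [Field K] [AddCommGroup V] [Module K V]
  [AddCommGroup W] [Module K W]

def posDefDims (Q : V → ℝ) : Set ℕ :=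
  {r | ∃ S : Submodule K V, finrank K S = r ∧ ∀ x ∈ S, x ≠ 0 → 0 < Q x}

variable {K}

theorem posDefDims_comp_subset {f : V →ₗ[K] W} (hf : Injective f) (Q : W → ℝ) :
    posDefDims K (Q ∘ f) ⊆ posDefDims K Q := by
  rintro _ ⟨S, rfl, hS⟩
  refine ⟨S.map f, (Submodule.equivMapOfInjective f hf S).finrank_eq.symm, ?_⟩
  rintro _ ⟨x, hx, rfl⟩ hfx
  exact hS x hx (by rintro rfl; exact hfx f.map_zero)

theorem posDefDims_comp_linearEquiv (e : V ≃ₗ[K] W) (Q : W → ℝ) :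
    posDefDims K (Q ∘ e) = posDefDims K Q := by
  refine (posDefDims_comp_subset e.injective Q).antisymm ?_
  simpa [comp_def] using posDefDims_comp_subset e.symm.injective (Q ∘ e)

theorem exists_mem_posDefDims_comp [FiniteDimensional K W] {f : V →ₗ[K] W} (hf : Injective f)
    {Q : W → ℝ} {r : ℕ} (hr : r ∈ posDefDims K Q) :
    ∃ r' ∈ posDefDims K (Q ∘ f), r + finrank K V ≤ r' + finrank K W := by
  obtain ⟨S, rfl, hS⟩ := hr
  have hcomap : finrank K (S.comap f) = finrank K ↥(LinearMap.range f ⊓ S) := by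
    rw [← Submodule.map_comap_eq]
    exact (Submodule.equivMapOfInjective f hf _).finrank_eq
  refine ⟨_, ⟨S.comap f, rfl, fun x hx hx0 => hS (f x) hx ((map_ne_zero_iff f hf).2 hx0)⟩, ?_⟩
  have := Submodule.finrank_sup_add_finrank_inf_eq (LinearMap.range f) S
  have := (LinearMap.range f ⊔ S).finrank_le
  rw [LinearMap.finrank_range_of_inj hf] at *
  omega

theorem IsGreatest.posDefDims_comp_interlacing [FiniteDimensional K W] {f : V →ₗ[K] W}
    {Q : W → ℝ} {p q : ℕ} (hp : IsGreatest (posDefDims K (Q ∘ f)) p) (hf : Injective f)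
    (hq : IsGreatest (posDefDims K Q) q) :
    p ≤ q ∧ q + finrank K V ≤ p + finrank K W := by
  refine ⟨hq.2 (posDefDims_comp_subset hf Q hp.1), ?_⟩
  obtain ⟨r, hr, hle⟩ := exists_mem_posDefDims_comp hf hq.1
  have := hp.2 hr
  omega

theorem finrank_add_finrank_le_of_pos_of_nonpos [FiniteDimensional K V] {Q : V → ℝ}
    {S T : Submodule K V} (hS : ∀ x ∈ S, x ≠ 0 → 0 < Q x) (hT : ∀ x ∈ T, Q x ≤ 0) :
    finrank K S + finrank K T ≤ finrank K V := by
  refine Submodule.finrank_add_finrank_le_of_disjoint <|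
    Submodule.disjoint_def.2 fun x hxS hxT => ?_
  by_contra hx
  exact (hS x hxS hx).not_ge (hT x hxT)

end PosDefDims

section VanishingOn

variable (K : Type*) [Field K] {ι : Type*}

def vanishingOn (p : ι → Prop) : Submodule K (ι → K) :=
  LinearMap.ker (LinearMap.funLeft K K (Subtype.val : {i // p i} → ι))

variable {K}

theorem mem_vanishingOn {p : ι → Prop} {z : ι → K} :
    z ∈ vanishingOn K p ↔ ∀ i, p i → z i = 0 := by
  simp [vanishingOn, funext_iff, LinearMap.funLeft]

theorem card_le_card_add_finrank_vanishingOn [Fintype ι] (p : ι → Prop) [DecidablePred p] :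
    Fintype.card ι ≤ Fintype.card {i // p i} + finrank K (vanishingOn K p) := by
  have h := (LinearMap.funLeft K K (Subtype.val : {i // p i} → ι)).finrank_range_add_finrank_ker
  have := (LinearMap.range (LinearMap.funLeft K K (Subtype.val : {i // p i} → ι))).finrank_le
  simp only [finrank_fintype_fun_eq_card] at h this
  rw [vanishingOn]
  omega

end VanishingOn

section WeightedSumSq

variable {K ι : Type*} [NormedField K] [Fintype ι]

def weightedSumSq (w : ι → ℝ) (z : ι → K) : ℝ := ∑ i, w i * ‖z i‖ ^ 2

theorem weightedSumSq_neg (w : ι → ℝ) (z : ι → K) :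
    weightedSumSq (-w) z = -weightedSumSq w z := by
  simp [weightedSumSq]

theorem weightedSumSq_pos {w : ι → ℝ} {z : ι → K}
    (hz : z ∈ vanishingOn K fun i => ¬ 0 < w i) (hz0 : z ≠ 0) : 0 < weightedSumSq w z := by
  rw [mem_vanishingOn] at hz
  obtain ⟨j, hj⟩ := Function.ne_iff.1 hz0
  have hpos : ∀ i, z i ≠ 0 → 0 < w i * ‖z i‖ ^ 2 := fun i hi =>
    mul_pos (not_not.1 (mt (hz i) hi)) (by positivity)
  refine Finset.sum_pos' (fun i _ => ?_) ⟨j, Finset.mem_univ j, hpos j hj⟩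
  by_cases hi : z i = 0
  · simp [hi]
  · exact (hpos i hi).le

theorem weightedSumSq_nonpos {w : ι → ℝ} {z : ι → K}
    (hz : z ∈ vanishingOn K fun i => 0 < w i) : weightedSumSq w z ≤ 0 := by
  rw [mem_vanishingOn] at hz
  refine Finset.sum_nonpos fun i _ => ?_
  by_cases hi : 0 < w i
  · simp [hz i hi]
  · exact mul_nonpos_of_nonpos_of_nonneg (not_lt.1 hi) (by positivity)

theorem isGreatest_posDefDims_weightedSumSq (w : ι → ℝ) :
    IsGreatest (posDefDims K (weightedSumSq (K := K) w)) (Fintype.card {i // 0 < w i}) := by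
  have hle :
      ∀ r ∈ posDefDims K (weightedSumSq (K := K) w), r ≤ Fintype.card {i // 0 < w i} := by
    rintro _ ⟨S, rfl, hS⟩
    have := finrank_add_finrank_le_of_pos_of_nonpos hS fun z hz => weightedSumSq_nonpos hz
    have := card_le_card_add_finrank_vanishingOn (K := K) fun i => 0 < w i
    simp only [finrank_fintype_fun_eq_card] at *
    omega
  have hmem : finrank K (vanishingOn K fun i => ¬ 0 < w i) ∈
      posDefDims K (weightedSumSq (K := K) w) :=
    ⟨_, rfl, fun z hz hz0 => weightedSumSq_pos hz hz0⟩
  refine ⟨?_, hle⟩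
  convert hmem using 1
  have := card_le_card_add_finrank_vanishingOn (K := K) fun i => ¬ 0 < w i
  have := Fintype.card_subtype_compl fun i => 0 < w i
  have := Fintype.card_subtype_le fun i => 0 < w i
  have := hle _ hmem
  omega

end WeightedSumSq

namespace Matrix

variable {𝕜 ι : Type*} [RCLike 𝕜] [Fintype ι]

def quadForm (A : Matrix ι ι 𝕜) (x : ι → 𝕜) : ℝ := RCLike.re (star x ⬝ᵥ A *ᵥ x)

theorem quadForm_submatrix {ι' : Type*} [Fintype ι'] (N : Matrix ι' ι' 𝕜) {e : ι → ι'}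
    (he : Injective e) (x : ι → 𝕜) :
    (N.submatrix e e).quadForm x = N.quadForm (ExtendByZero.linearMap 𝕜 e x) := by
  have hext : ∀ (g : ι → 𝕜) j, j ∉ Set.range e → extend e g 0 j = 0 :=
    fun _ _ hj => extend_apply' _ _ _ hj
  have hmulVec : ∀ i, (N.submatrix e e *ᵥ x) i = (N *ᵥ extend e x 0) (e i) :=
    fun i => Fintype.sum_of_injective e he _ _ (fun j hj => by simp [hext x j hj])
      fun k => by simp [he.extend_apply]
  change RCLike.re _ = RCLike.re (star (extend e x 0) ⬝ᵥ N *ᵥ extend e x 0)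
  congr 1
  refine Fintype.sum_of_injective e he _ _ (fun j hj => by simp [hext x j hj]) fun i => ?_
  simp [hmulVec, he.extend_apply]

variable [DecidableEq ι]

namespace IsHermitian

variable {A : Matrix ι ι 𝕜} (hA : A.IsHermitian)

noncomputable def eigenCoords : (ι → 𝕜) ≃ₗ[𝕜] (ι → 𝕜) :=
  (WithLp.linearEquiv 2 𝕜 (ι → 𝕜)).symm ≪≫ₗ hA.eigenvectorBasis.repr.toLinearEquiv ≪≫ₗ
    WithLp.linearEquiv 2 𝕜 (ι → 𝕜)

theorem eigenCoords_apply (x : ι → 𝕜) (i : ι) :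
    hA.eigenCoords x i = inner 𝕜 (hA.eigenvectorBasis i) (WithLp.toLp 2 x) :=
  hA.eigenvectorBasis.repr_apply_apply _ i

theorem inner_eigenvectorBasis_mulVec (x : ι → 𝕜) (i : ι) :
    inner 𝕜 (hA.eigenvectorBasis i) (WithLp.toLp 2 (A *ᵥ x)) =
      hA.eigenvalues i * inner 𝕜 (hA.eigenvectorBasis i) (WithLp.toLp 2 x) := by
  have := (isSymmetric_toEuclideanLin_iff.mpr hA) (hA.eigenvectorBasis i) (WithLp.toLp 2 x)
  simp only [toLpLin_apply, mulVec_eigenvectorBasis] at this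
  rw [← this, WithLp.toLp_smul, WithLp.toLp_ofLp, RCLike.real_smul_eq_coe_smul (K := 𝕜),
    inner_smul_left, RCLike.conj_ofReal]

theorem quadForm_eq_weightedSumSq (x : ι → 𝕜) :
    A.quadForm x = weightedSumSq hA.eigenvalues (hA.eigenCoords x) := by
  have hparseval :=
    hA.eigenvectorBasis.sum_inner_mul_inner (WithLp.toLp 2 x) (WithLp.toLp 2 (A *ᵥ x))
  rw [EuclideanSpace.inner_eq_star_dotProduct] at hparseval
  simp only [quadForm, weightedSumSq, map_sum, eigenCoords_apply, dotProduct_comm (star x),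
    ← hparseval, inner_eigenvectorBasis_mulVec]
  refine Finset.sum_congr rfl fun i _ => ?_
  rw [← inner_conj_symm, mul_left_comm, RCLike.conj_mul]
  norm_cast

include hA in
theorem isGreatest_posDefDims_quadForm :
    IsGreatest (posDefDims 𝕜 A.quadForm) (posInertia A) := by
  have hQ : A.quadForm = weightedSumSq hA.eigenvalues ∘ hA.eigenCoords :=
    funext hA.quadForm_eq_weightedSumSq
  rw [hQ, posDefDims_comp_linearEquiv, posInertia, dif_pos hA]
  exact isGreatest_posDefDims_weightedSumSq _

include hA in
theorem isGreatest_posDefDims_neg_quadForm :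
    IsGreatest (posDefDims 𝕜 (-A.quadForm)) (negInertia A) := by
  have hQ : -A.quadForm = weightedSumSq (-hA.eigenvalues) ∘ hA.eigenCoords :=
    funext fun x => by simp [hA.quadForm_eq_weightedSumSq, weightedSumSq_neg]
  have hcard :
      Fintype.card {i // 0 < -hA.eigenvalues i} = Fintype.card {i // hA.eigenvalues i < 0} :=
    Fintype.card_congr (Equiv.subtypeEquivRight fun _ => neg_pos)
  rw [hQ, posDefDims_comp_linearEquiv, negInertia, dif_pos hA, ← hcard]
  exact isGreatest_posDefDims_weightedSumSq _

end IsHermitian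

variable {ι' : Type*} [Fintype ι'] [DecidableEq ι'] {N : Matrix ι' ι' 𝕜}

theorem IsHermitian.posInertia_submatrix (hN : N.IsHermitian) {e : ι → ι'} (he : Injective e) :
    posInertia (N.submatrix e e) ≤ posInertia N ∧
      posInertia N + Fintype.card ι ≤ posInertia (N.submatrix e e) + Fintype.card ι' := by
  have hQ : N.quadForm ∘ ExtendByZero.linearMap 𝕜 e = (N.submatrix e e).quadForm :=
    funext fun x => (quadForm_submatrix N he x).symm
  have hsub := (hN.submatrix e).isGreatest_posDefDims_quadForm
  rw [← hQ] at hsub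
  simpa only [finrank_fintype_fun_eq_card] using hsub.posDefDims_comp_interlacing
    (extend_injective he (0 : ι' → 𝕜)) hN.isGreatest_posDefDims_quadForm

theorem IsHermitian.negInertia_submatrix (hN : N.IsHermitian) {e : ι → ι'} (he : Injective e) :
    negInertia (N.submatrix e e) ≤ negInertia N ∧
      negInertia N + Fintype.card ι ≤ negInertia (N.submatrix e e) + Fintype.card ι' := by
  have hQ : -N.quadForm ∘ ExtendByZero.linearMap 𝕜 e = -(N.submatrix e e).quadForm :=
    funext fun x => congrArg Neg.neg (quadForm_submatrix N he x).symm
  have hsub := (hN.submatrix e).isGreatest_posDefDims_neg_quadForm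
  rw [← hQ] at hsub
  simpa only [finrank_fintype_fun_eq_card] using hsub.posDefDims_comp_interlacing
    (extend_injective he (0 : ι' → 𝕜)) hN.isGreatest_posDefDims_neg_quadForm

end Matrix

theorem isHermitian_of_bordered {𝕜 : Type*} [RCLike 𝕜] {n : ℕ} {M : Matrix (Fin n) (Fin n) 𝕜}
    (hM : M.IsHermitian) {y : Fin n → 𝕜} {a : ℝ} {N : Matrix (Fin (n + 1)) (Fin (n + 1)) 𝕜}
    (hblock : ∀ i j : Fin n, N i.castSucc j.castSucc = M i j)
    (hcol : ∀ i : Fin n, N i.castSucc (Fin.last n) = y i)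
    (hrow : ∀ j : Fin n, N (Fin.last n) j.castSucc = star (y j))
    (hcorner : N (Fin.last n) (Fin.last n) = (a : 𝕜)) : N.IsHermitian := by
  ext i j
  rw [conjTranspose_apply]
  induction i using Fin.lastCases with
  | last =>
    induction j using Fin.lastCases with
    | last => rw [hcorner, RCLike.star_def, RCLike.conj_ofReal]
    | cast j => rw [hcol, hrow]
  | cast i =>
    induction j using Fin.lastCases with
    | last => rw [hrow, hcol, star_star]
    | cast j => rw [hblock, hblock, hM.apply]

/-- bordering a Hermitian matrix by one row and column changes
the positive and negative inertia indices by at most one. -/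
theorem stmt14 {n : ℕ} (M : Matrix (Fin n) (Fin n) ℂ) (hM : M.IsHermitian)
    (y : Fin n → ℂ) (a : ℝ) (N : Matrix (Fin (n + 1)) (Fin (n + 1)) ℂ)
    (hblock : ∀ i j : Fin n, N i.castSucc j.castSucc = M i j)
    (hcol : ∀ i : Fin n, N i.castSucc (Fin.last n) = y i)
    (hrow : ∀ j : Fin n, N (Fin.last n) j.castSucc = star (y j))
    (hcorner : N (Fin.last n) (Fin.last n) = (a : ℂ)) :
    posInertia N - 1 ≤ posInertia M ∧ posInertia M ≤ posInertia N ∧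
    negInertia N - 1 ≤ negInertia M ∧ negInertia M ≤ negInertia N := by
  have hN := isHermitian_of_bordered hM hblock hcol hrow hcorner
  have hMN : N.submatrix Fin.castSucc Fin.castSucc = M := Matrix.ext hblock
  have hpos := hN.posInertia_submatrix (Fin.castSucc_injective n)
  have hneg := hN.negInertia_submatrix (Fin.castSucc_injective n)
  rw [hMN, Fintype.card_fin, Fintype.card_fin] at hpos hneg
  omega
end

section
/- Let P^n_w be a weighted path on n ≥ 1 vertices v_1, v_2, …, v_n (edges v_iv_{i+1} for 1 ≤ i ≤ n−1) with positive edge weights. Then i_+(P^n_w) = i_-(P^n_w) = (n−1)/2 if n is odd, and i_+(P^n_w) = i_-(P^n_w) = n/2 if n is even. -/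
open Matrix

/-!
Conjugating the adjacency matrix `A` of a weighted path by the signing `diag ((-1) ^ i)` gives
`-A`, because every edge joins vertices of opposite parity. Hence `A` and `-A` have the same
characteristic polynomial, the spectrum of `A` is symmetric about `0`, and `i₊ = i₋`. Moreover
`A` is tridiagonal with nonzero off-diagonal entries, so a kernel vector vanishing at the first
vertex vanishes everywhere and `i₊ + i₋ = rank A ≥ n - 1`. With `i₊ + i₋ ≤ n` this forces
`i₊ = i₋ = ⌊n / 2⌋`.
-/

open Polynomial

namespace Matrix

variable {ι : Type*} [Fintype ι] [DecidableEq ι]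

theorem charpoly_comp_neg_X {R : Type*} [CommRing R] (A : Matrix ι ι R) :
    A.charpoly.comp (-X) = (-1) ^ Fintype.card ι * (-A).charpoly := by
  have hmap : (compRingHom (-X)).mapMatrix (charmatrix A) = -charmatrix (-A) := by
    ext i j : 1
    rcases eq_or_ne i j with rfl | hij
    · simp [sub_eq_add_neg, add_comm]
    · simp [hij]
  rw [charpoly, ← coe_compRingHom_apply, RingHom.map_det, hmap, det_neg, charpoly]

theorem charpoly_neg_eq_of_signing {R : Type*} [CommRing R] (A : Matrix ι ι R) (s : ι → R)
    (hs : ∀ i, s i * s i = 1) (hA : ∀ i j, A i j ≠ 0 → s i * s j = -1) :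
    (-A).charpoly = A.charpoly := by
  have hss : diagonal s * diagonal s = 1 := by
    rw [diagonal_mul_diagonal, ← diagonal_one]; exact congrArg diagonal (funext hs)
  have hconj : diagonal s * A * diagonal s = -A := by
    ext i j
    rw [mul_diagonal, diagonal_mul, neg_apply]
    by_cases hij : A i j = 0
    · simp [hij]
    · linear_combination A i j * hA i j hij
  let D : (Matrix ι ι R)ˣ := ⟨diagonal s, diagonal s, hss, hss⟩
  have hinv : (diagonal s)⁻¹ = diagonal s := inv_eq_left_inv hss
  simpa [D, hinv, hconj] using charpoly_units_conj D A

end Matrix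

theorem Multiset.countP_pos_eq_countP_neg {α : Type*} [AddCommGroup α] [LinearOrder α]
    [IsOrderedAddMonoid α] {s : Multiset α} (hs : s.map Neg.neg = s) :
    s.countP (0 < ·) = s.countP (· < 0) := by
  conv_lhs => rw [← hs]
  rw [Multiset.countP_map, Multiset.countP_eq_card_filter]
  simp only [Left.neg_pos_iff]

namespace Matrix.IsHermitian

variable {ι 𝕜 : Type*} [Fintype ι] [DecidableEq ι] [RCLike 𝕜] {A : Matrix ι ι 𝕜}

theorem map_neg_eigenvalues (hA : A.IsHermitian) (h : (-A).charpoly = A.charpoly) :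
    (Finset.univ.val.map hA.eigenvalues).map Neg.neg = Finset.univ.val.map hA.eigenvalues := by
  have hroots : A.charpoly.roots.map Neg.neg = A.charpoly.roots := by
    rw [← roots_comp_neg_X, charpoly_comp_neg_X, h, ← C_1, ← C_neg, ← C_pow,
      roots_C_mul _ (pow_ne_zero _ (neg_ne_zero.mpr one_ne_zero))]
  have := congrArg (Multiset.map RCLike.re) hroots
  simpa [hA.roots_charpoly_eq_eigenvalues, Multiset.map_map, Function.comp_def] using this

theorem card_pos_eigenvalues_eq_card_neg (hA : A.IsHermitian) (h : (-A).charpoly = A.charpoly) :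
    Fintype.card {i // 0 < hA.eigenvalues i} = Fintype.card {i // hA.eigenvalues i < 0} := by
  have := Multiset.countP_pos_eq_countP_neg (hA.map_neg_eigenvalues h)
  rw [Multiset.countP_map, Multiset.countP_map] at this
  simpa only [Fintype.card_subtype, Finset.card_def, Finset.filter_val] using this

end Matrix.IsHermitian

section Inertia

variable {ι 𝕜 : Type*} [Fintype ι] [DecidableEq ι] [RCLike 𝕜] {A : Matrix ι ι 𝕜}

theorem rank_eq_posInertia_add_negInertia (hA : A.IsHermitian) :
    A.rank = posInertia A + negInertia A := by
  rw [posInertia, negInertia, dif_pos hA, dif_pos hA, hA.rank_eq_card_non_zero_eigs, add_comm,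
    ← Fintype.card_subtype_or_disjoint]
  · simp_rw [ne_iff_lt_or_gt]
  · exact fun p hlt hgt i hi => (lt_asymm (hlt i hi) (hgt i hi)).elim

theorem negInertia_eq_posInertia (hA : A.IsHermitian) (h : (-A).charpoly = A.charpoly) :
    negInertia A = posInertia A := by
  rw [posInertia, negInertia, dif_pos hA, dif_pos hA, hA.card_pos_eigenvalues_eq_card_neg h]

end Inertia

namespace Matrix

def IsUnreducedLowerHessenberg {R : Type*} [Zero R] {n : ℕ} (A : Matrix (Fin n) (Fin n) R) :
    Prop :=
  ∀ i j : Fin n, (i.val + 1 < j.val → A i j = 0) ∧ (j.val = i.val + 1 → A i j ≠ 0)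

namespace IsUnreducedLowerHessenberg

variable {n : ℕ}

theorem eq_zero_of_mulVec_eq_zero {R : Type*} [Semiring R] [NoZeroDivisors R]
    {A : Matrix (Fin (n + 1)) (Fin (n + 1)) R} (hA : A.IsUnreducedLowerHessenberg)
    {v : Fin (n + 1) → R} (hv : A *ᵥ v = 0) (h0 : v 0 = 0) : v = 0 := by
  suffices ∀ k (hk : k < n + 1), v ⟨k, hk⟩ = 0 from funext fun i => this i.val i.isLt
  intro k
  induction k using Nat.strong_induction_on with
  | _ k ih =>
  intro hk
  cases k with
  | zero => exact h0
  | succ k =>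
    -- row `k` of `A *ᵥ v = 0` involves only `v 0, …, v (k + 1)`, all but the last vanishing
    have hrow : A ⟨k, by omega⟩ ⟨k + 1, hk⟩ * v ⟨k + 1, hk⟩ = 0 := by
      rw [← Finset.sum_eq_single (s := Finset.univ) (f := fun j => A ⟨k, by omega⟩ j * v j)
        ⟨k + 1, hk⟩]
      · exact congrFun hv _
      · intro j _ hj
        rcases lt_or_gt_of_ne (Fin.val_ne_of_ne hj) with hlt | hgt
        · rw [ih j (by omega) j.isLt, mul_zero]
        · rw [(hA _ j).1 (by omega), zero_mul]
      · simp
    exact (mul_eq_zero.mp hrow).resolve_left ((hA _ _).2 rfl)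

theorem sub_one_le_rank {K : Type*} [Field K] {A : Matrix (Fin n) (Fin n) K}
    (hA : A.IsUnreducedLowerHessenberg) : n - 1 ≤ A.rank := by
  cases n with
  | zero => exact Nat.zero_le _
  | succ n =>
    have hker : Module.finrank K (LinearMap.ker A.mulVecLin) ≤ 1 := by
      have hinj :
          Function.Injective ((LinearMap.proj 0).comp (LinearMap.ker A.mulVecLin).subtype) := by
        rw [← LinearMap.ker_eq_bot, Submodule.eq_bot_iff]
        exact fun x hx => Subtype.ext (hA.eq_zero_of_mulVec_eq_zero x.2 hx)
      simpa using LinearMap.finrank_le_finrank_of_injective hinj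
    have := LinearMap.finrank_range_add_finrank_ker A.mulVecLin
    rw [Module.finrank_fin_fun] at this
    rw [Matrix.rank]
    omega

end IsUnreducedLowerHessenberg

end Matrix

namespace WeightedGraph

variable {V : Type*} [Fintype V] [DecidableEq V]

theorem adjMatrix_ne_zero_iff (W : WeightedGraph V) {a b : V} :
    W.adjMatrix a b ≠ 0 ↔ W.G.Adj a b := by
  by_cases h : W.G.Adj a b
  · simpa [adjMatrix, h] using (W.pos a b h).ne'
  · simp [adjMatrix, h]

theorem isHermitian_adjMatrix (W : WeightedGraph V) : W.adjMatrix.IsHermitian := by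
  ext a b
  by_cases h : W.G.Adj a b
  · simp [adjMatrix, h, h.symm, W.symm]
  · have h' : ¬W.G.Adj b a := fun h' => h h'.symm
    simp [adjMatrix, h, h']

section Path

variable {n : ℕ} {W : WeightedGraph (Fin n)}
  (hadj : ∀ a b : Fin n, W.G.Adj a b ↔ (b.1 = a.1 + 1 ∨ a.1 = b.1 + 1))
include hadj

theorem isUnreducedLowerHessenberg_adjMatrix_of_path :
    W.adjMatrix.IsUnreducedLowerHessenberg := fun i j =>
  ⟨fun h => not_not.mp fun hne => by have := (hadj i j).mp (W.adjMatrix_ne_zero_iff.mp hne); omega,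
    fun h => W.adjMatrix_ne_zero_iff.mpr ((hadj i j).mpr (Or.inl h))⟩

theorem charpoly_neg_adjMatrix_of_path : (-W.adjMatrix).charpoly = W.adjMatrix.charpoly := by
  refine Matrix.charpoly_neg_eq_of_signing _ (fun i => (-1) ^ i.val) (fun i => ?_) fun i j h => ?_
  · rw [← pow_add]
    exact Even.neg_one_pow ⟨_, rfl⟩
  · rw [← pow_add]
    exact Odd.neg_one_pow (by rcases (hadj i j).mp (W.adjMatrix_ne_zero_iff.mp h) with h | h <;>
      exact ⟨min i.val j.val, by omega⟩)

end Path

end WeightedGraph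

theorem stmt17_general (n : ℕ) (W : WeightedGraph (Fin n))
    (hadj : ∀ a b : Fin n, W.G.Adj a b ↔ (b.1 = a.1 + 1 ∨ a.1 = b.1 + 1)) :
    (Odd n → W.iPos = (n - 1) / 2 ∧ W.iNeg = (n - 1) / 2) ∧
    (Even n → W.iPos = n / 2 ∧ W.iNeg = n / 2) := by
  have hA := W.isHermitian_adjMatrix
  have hrank := rank_eq_posInertia_add_negInertia hA
  have hsymm := negInertia_eq_posInertia hA (WeightedGraph.charpoly_neg_adjMatrix_of_path hadj)
  have hlower := (WeightedGraph.isUnreducedLowerHessenberg_adjMatrix_of_path hadj).sub_one_le_rank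
  have hupper := W.adjMatrix.rank_le_width
  simp only [WeightedGraph.iPos, WeightedGraph.iNeg]
  constructor <;> rintro ⟨k, rfl⟩ <;> omega

/-- the inertia of a weighted path on `n` vertices
(vertices `0, 1, …, n-1` in path order). -/
theorem stmt17 (n : ℕ) (hn : 1 ≤ n) (W : WeightedGraph (Fin n))
    (hadj : ∀ a b : Fin n, W.G.Adj a b ↔ (b.1 = a.1 + 1 ∨ a.1 = b.1 + 1)) :
    (Odd n → W.iPos = (n - 1) / 2 ∧ W.iNeg = (n - 1) / 2) ∧
    (Even n → W.iPos = n / 2 ∧ W.iNeg = n / 2) :=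
  stmt17_general n W hadj
end
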